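/- Let d ≥ 1 and j ≥ 2 be integers and let α and σ be real numbers satisfying (j-1)d/(2j) < 1 + α < d/2 and σ < j(α + 1 - d/2). Then ∑_{n ∈ ℤ^d} ⟨n⟩^{2σ} ∑_{(n_1,…,n_j) ∈ (ℤ^d)^j, n_1+⋯+n_j = n} ⟨n_1⟩^{-2(1+α)} ⋯ ⟨n_j⟩^{-2(1+α)} < ∞. -/

import Mathlib

open scoped ENNReal NNReal BigOperators
open scoped Classical

/-- The Japanese bracket `⟨n⟩ = (1 + |n|²)^{1/2}` of a lattice point `n ∈ ℤ^d`,
where `|n|` is the Euclidean norm. -/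
noncomputable def jpn {d : ℕ} (n : Fin d → ℤ) : ℝ :=
  Real.sqrt (1 + ∑ i, ((n i : ℝ)) ^ 2)

/-!
Put `β = 2(1 + α)`; the inner sum is the `j`-fold convolution power of `⟨·⟩^{-β}`.
For `e > d` and `a, b ≤ e ≤ a + b` one has `∑ₘ ⟨m⟩^{-a} ⟨n - m⟩^{-b} ≲ ⟨n⟩^{-(a + b - e)}`:
since `⟨n⟩ ≤ 2 max(⟨m⟩, ⟨n - m⟩)`, the larger factor can give up `a + b - e` powers in
exchange for a power of `⟨n⟩`, and what remains is bounded by `⟨m⟩^{-e} + ⟨n - m⟩^{-e}`, which is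
summable. Convolving the Dirac mass `j` times with `⟨·⟩^{-β}` therefore gives decay
`⟨n⟩^{-(e - j(e - β))}`, and as `e ↓ d` this exponent tends to `jβ - (j - 1)d`, which the
hypotheses make positive and larger than `d + 2σ`; so the outer sum converges.
-/

open Filter Topology

lemma ENNReal.tsum_fin_succ_pi {α : Type*} {k : ℕ} (F : (Fin (k + 1) → α) → ℝ≥0∞) :
    ∑' v, F v = ∑' (x : α) (w : Fin k → α), F (Fin.cons x w) := by
  rw [← (Fin.consEquiv fun _ => α).tsum_eq, ENNReal.tsum_prod']
  rfl

lemma ENNReal.tsum_fin_pi_prod {α : Type*} (g : α → ℝ≥0∞) (k : ℕ) :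
    ∑' v : Fin k → α, ∏ i, g (v i) = (∑' x, g x) ^ k := by
  induction k with
  | zero => simp
  | succ k ih =>
    simp only [ENNReal.tsum_fin_succ_pi, Fin.prod_univ_succ, Fin.cons_zero, Fin.cons_succ,
      ENNReal.tsum_mul_left, ih, ENNReal.tsum_mul_right, pow_succ']

section ConvPow

variable {G : Type*} [AddCommGroup G] [DecidableEq G]

noncomputable def convPow (f : G → ℝ≥0∞) (k : ℕ) (n : G) : ℝ≥0∞ :=
  ∑' v : Fin k → G, if ∑ l, v l = n then ∏ l, f (v l) else 0

lemma convPow_zero (f : G → ℝ≥0∞) (n : G) : convPow f 0 n = if n = 0 then 1 else 0 := by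
  simp [convPow, eq_comm]

lemma convPow_succ (f : G → ℝ≥0∞) (k : ℕ) (n : G) :
    convPow f (k + 1) n = ∑' m, f m * convPow f k (n - m) := by
  simp only [convPow, ENNReal.tsum_fin_succ_pi, Fin.sum_univ_succ, Fin.prod_univ_succ,
    Fin.cons_zero, Fin.cons_succ, ← ENNReal.tsum_mul_left, mul_ite, mul_zero, eq_sub_iff_add_eq']

end ConvPow

lemma Real.rpow_neg_mul_rpow_neg_le_of_le {P Q R a b e : ℝ} (hP : 0 < P) (hR : 0 < R)
    (hRQ : R ≤ Q) (hPQ : P ≤ 2 * Q) (hbe : b ≤ e) (habe : e ≤ a + b) :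
    Q ^ (-a) * R ^ (-b) ≤ 2 ^ (a + b - e) * P ^ (-(a + b - e)) * R ^ (-e) := by
  have hQ : 0 < Q := hR.trans_le hRQ
  calc Q ^ (-a) * R ^ (-b) = Q ^ (-(a + b - e)) * Q ^ (-(e - b)) * R ^ (-b) := by
        rw [← Real.rpow_add hQ]; ring_nf
    _ ≤ (P / 2) ^ (-(a + b - e)) * R ^ (-(e - b)) * R ^ (-b) := by
        have hQP : Q ^ (-(a + b - e)) ≤ (P / 2) ^ (-(a + b - e)) :=
          Real.rpow_le_rpow_of_nonpos (by positivity) (by linarith) (by linarith)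
        have hQR : Q ^ (-(e - b)) ≤ R ^ (-(e - b)) :=
          Real.rpow_le_rpow_of_nonpos hR hRQ (by linarith)
        gcongr
    _ = 2 ^ (a + b - e) * P ^ (-(a + b - e)) * R ^ (-e) := by
        rw [mul_assoc, ← Real.rpow_add hR, Real.div_rpow hP.le zero_le_two, Real.rpow_neg zero_le_two]
        field_simp
        ring_nf

lemma Real.rpow_neg_mul_rpow_neg_le {P Q R a b e : ℝ} (hP : 0 < P) (hQ : 0 < Q) (hR : 0 < R)
    (hPQR : P ≤ 2 * max Q R) (hae : a ≤ e) (hbe : b ≤ e) (habe : e ≤ a + b) :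
    Q ^ (-a) * R ^ (-b) ≤ 2 ^ (a + b - e) * P ^ (-(a + b - e)) * (Q ^ (-e) + R ^ (-e)) := by
  rcases le_total R Q with hRQ | hQR
  · calc Q ^ (-a) * R ^ (-b) ≤ 2 ^ (a + b - e) * P ^ (-(a + b - e)) * R ^ (-e) :=
          rpow_neg_mul_rpow_neg_le_of_le hP hR hRQ (by rwa [max_eq_left hRQ] at hPQR) hbe habe
      _ ≤ _ := by gcongr; exact le_add_of_nonneg_left (by positivity)
  · calc Q ^ (-a) * R ^ (-b) = R ^ (-b) * Q ^ (-a) := mul_comm _ _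
      _ ≤ 2 ^ (b + a - e) * P ^ (-(b + a - e)) * Q ^ (-e) :=
          rpow_neg_mul_rpow_neg_le_of_le hP hQ hQR (by rwa [max_eq_right hQR] at hPQR) hae
            (by linarith)
      _ ≤ _ := by rw [add_comm b a]; gcongr; exact le_add_of_nonneg_right (by positivity)

lemma summable_one_add_sq_rpow_neg {p : ℝ} (hp : 1 / 2 < p) :
    Summable fun x : ℤ => (1 + (x : ℝ) ^ 2) ^ (-p) := by
  refine (Real.summable_abs_int_rpow (b := 2 * p) (by linarith)).of_norm_bounded_eventually ?_
  filter_upwards [eventually_cofinite_ne 0] with x hx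
  have habs : 0 < |(x : ℝ)| := by positivity
  rw [Real.norm_of_nonneg (by positivity), neg_mul_eq_mul_neg, Real.rpow_mul habs.le,
    ← sq_abs, Real.rpow_two]
  exact Real.rpow_le_rpow_of_nonpos (by positivity) (by linarith) (by linarith)

section Bracket

variable {d : ℕ}

lemma sq_jpn (n : Fin d → ℤ) : jpn n ^ 2 = 1 + ∑ i, (n i : ℝ) ^ 2 :=
  Real.sq_sqrt (by positivity)

lemma one_le_jpn (n : Fin d → ℤ) : 1 ≤ jpn n :=
  Real.one_le_sqrt.2 (le_add_of_nonneg_right (by positivity))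

lemma jpn_pos (n : Fin d → ℤ) : 0 < jpn n :=
  one_pos.trans_le (one_le_jpn n)

@[simp] lemma jpn_zero : jpn (0 : Fin d → ℤ) = 1 := by
  simp [jpn]

lemma sq_jpn_add_le (m k : Fin d → ℤ) : jpn (m + k) ^ 2 ≤ 2 * jpn m ^ 2 + 2 * jpn k ^ 2 := by
  have hcoord (i : Fin d) : ((m i : ℝ) + k i) ^ 2 ≤ 2 * (m i : ℝ) ^ 2 + 2 * (k i : ℝ) ^ 2 := by
    nlinarith [sq_nonneg ((m i : ℝ) - k i)]
  have := Finset.sum_le_sum fun i (_ : i ∈ Finset.univ) => hcoord i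
  simp only [sq_jpn, Pi.add_apply, Int.cast_add]
  rw [Finset.sum_add_distrib, ← Finset.mul_sum, ← Finset.mul_sum] at this
  linarith

lemma jpn_add_le_two_mul_max (m k : Fin d → ℤ) : jpn (m + k) ≤ 2 * max (jpn m) (jpn k) := by
  have hm := le_max_left (jpn m) (jpn k)
  have hk := le_max_right (jpn m) (jpn k)
  refine (pow_le_pow_iff_left₀ (jpn_pos _).le (by linarith [jpn_pos m]) two_ne_zero).1 ?_
  nlinarith [sq_jpn_add_le m k, jpn_pos m, jpn_pos k]

lemma jpn_rpow_neg_le_prod {e p : ℝ} (hp : 0 ≤ p) (hpe : 2 * d * p ≤ e) (m : Fin d → ℤ) :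
    jpn m ^ (-e) ≤ ∏ i, (1 + (m i : ℝ) ^ 2) ^ (-p) := by
  calc jpn m ^ (-e) ≤ jpn m ^ (-(2 * d * p)) :=
        Real.rpow_le_rpow_of_exponent_le (one_le_jpn m) (by linarith)
    _ = ∏ _i : Fin d, (jpn m ^ 2) ^ (-p) := by
        rw [Finset.prod_const, Finset.card_univ, Fintype.card_fin, ← Real.rpow_natCast,
          ← Real.rpow_two, ← Real.rpow_mul (jpn_pos m).le, ← Real.rpow_mul (jpn_pos m).le]
        ring_nf
    _ ≤ ∏ i, (1 + (m i : ℝ) ^ 2) ^ (-p) := by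
        refine Finset.prod_le_prod (fun _ _ => by positivity) fun i _ => ?_
        refine Real.rpow_le_rpow_of_nonpos (by positivity) ?_ (by linarith)
        rw [sq_jpn]
        gcongr
        exact Finset.single_le_sum (f := fun i => (m i : ℝ) ^ 2) (fun _ _ => sq_nonneg _)
          (Finset.mem_univ i)

noncomputable def jpnRpow (t : ℝ) (n : Fin d → ℤ) : ℝ≥0∞ :=
  ENNReal.ofReal (jpn n ^ t)

lemma jpnRpow_mul_jpnRpow (s t : ℝ) (n : Fin d → ℤ) :
    jpnRpow s n * jpnRpow t n = jpnRpow (s + t) n := by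
  rw [jpnRpow, jpnRpow, jpnRpow, ← ENNReal.ofReal_mul (Real.rpow_nonneg (jpn_pos n).le _),
    Real.rpow_add (jpn_pos n)]

theorem tsum_jpnRpow_neg_lt_top {e : ℝ} (hde : (d : ℝ) < e) :
    ∑' m : Fin d → ℤ, jpnRpow (-e) m < ∞ := by
  rcases Nat.eq_zero_or_pos d with rfl | hd
  · simp [jpnRpow]
  set p := e / (2 * d)
  have hp : 1 / 2 < p := by rw [lt_div_iff₀ (by positivity)]; linarith
  have hpe : 2 * d * p = e := by simp only [p]; field_simp
  calc ∑' m : Fin d → ℤ, jpnRpow (-e) m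
      ≤ ∑' m : Fin d → ℤ, ∏ i, ENNReal.ofReal ((1 + (m i : ℝ) ^ 2) ^ (-p)) := by
        refine ENNReal.tsum_le_tsum fun m => ?_
        rw [← ENNReal.ofReal_prod_of_nonneg fun _ _ => by positivity]
        exact ENNReal.ofReal_le_ofReal (jpn_rpow_neg_le_prod (by linarith) hpe.le m)
    _ = (∑' x : ℤ, ENNReal.ofReal ((1 + (x : ℝ) ^ 2) ^ (-p))) ^ d :=
        ENNReal.tsum_fin_pi_prod (fun x : ℤ => ENNReal.ofReal ((1 + (x : ℝ) ^ 2) ^ (-p))) d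
    _ < ∞ := by
        rw [← ENNReal.ofReal_tsum_of_nonneg (fun _ => by positivity)
          (summable_one_add_sq_rpow_neg hp)]
        exact ENNReal.pow_lt_top ENNReal.ofReal_lt_top

theorem exists_tsum_jpnRpow_mul_jpnRpow_sub_le {a b e : ℝ} (hde : (d : ℝ) < e) (hae : a ≤ e)
    (hbe : b ≤ e) (habe : e ≤ a + b) :
    ∃ C < ∞, ∀ n : Fin d → ℤ,
      ∑' m, jpnRpow (-a) m * jpnRpow (-b) (n - m) ≤ C * jpnRpow (-(a + b - e)) n := by
  set S := ∑' m : Fin d → ℤ, jpnRpow (-e) m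
  set K := ENNReal.ofReal (2 ^ (a + b - e))
  refine ⟨K * (2 * S), ENNReal.mul_lt_top ENNReal.ofReal_lt_top
    (ENNReal.mul_lt_top (by norm_num) (tsum_jpnRpow_neg_lt_top hde)), fun n => ?_⟩
  have hpt (m : Fin d → ℤ) : jpnRpow (-a) m * jpnRpow (-b) (n - m)
      ≤ K * jpnRpow (-(a + b - e)) n * (jpnRpow (-e) m + jpnRpow (-e) (n - m)) := by
    have hn : jpn n ≤ 2 * max (jpn m) (jpn (n - m)) := by
      simpa using jpn_add_le_two_mul_max m (n - m)
    have hreal := Real.rpow_neg_mul_rpow_neg_le (jpn_pos n) (jpn_pos m) (jpn_pos (n - m)) hn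
      hae hbe habe
    have hr (t : ℝ) (x : Fin d → ℤ) : 0 ≤ jpn x ^ t := Real.rpow_nonneg (jpn_pos x).le t
    have h := ENNReal.ofReal_le_ofReal hreal
    rwa [ENNReal.ofReal_mul (hr (-a) m), ENNReal.ofReal_mul (mul_nonneg (by positivity) (hr _ n)),
      ENNReal.ofReal_mul (p := 2 ^ (a + b - e)) (by positivity),
      ENNReal.ofReal_add (hr _ m) (hr _ (n - m))] at h
  calc ∑' m, jpnRpow (-a) m * jpnRpow (-b) (n - m)
      ≤ ∑' m, K * jpnRpow (-(a + b - e)) n * (jpnRpow (-e) m + jpnRpow (-e) (n - m)) :=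
        ENNReal.tsum_le_tsum hpt
    _ = K * jpnRpow (-(a + b - e)) n * (S + S) := by
        have hS : ∑' m, jpnRpow (-e) (n - m) = S := (Equiv.subLeft n).tsum_eq (jpnRpow (-e))
        rw [ENNReal.tsum_mul_left, ENNReal.tsum_add, hS]
    _ = K * (2 * S) * jpnRpow (-(a + b - e)) n := by ring

theorem exists_convPow_jpnRpow_le {β e : ℝ} (hde : (d : ℝ) < e) (hβe : β ≤ e) :
    ∀ k : ℕ, 0 ≤ e - k * (e - β) → ∃ C < ∞, ∀ n : Fin d → ℤ,
      convPow (jpnRpow (-β)) k n ≤ C * jpnRpow (-(e - k * (e - β))) n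
  | 0, _ => ⟨1, ENNReal.one_lt_top, fun n => by
      rw [convPow_zero]
      split_ifs with hn
      · simp [hn, jpnRpow]
      · exact zero_le⟩
  | k + 1, hk => by
    push_cast at hk
    set γ := e - k * (e - β)
    have hγe : γ ≤ e := sub_le_self _ (mul_nonneg k.cast_nonneg (sub_nonneg.2 hβe))
    obtain ⟨C, hC, hCn⟩ := exists_convPow_jpnRpow_le hde hβe k (by simp only [γ] at *; linarith)
    obtain ⟨C', hC', hC'n⟩ :=
      exists_tsum_jpnRpow_mul_jpnRpow_sub_le hde hβe hγe (by simp only [γ] at *; linarith)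
    refine ⟨C' * C, ENNReal.mul_lt_top hC' hC, fun n => ?_⟩
    calc convPow (jpnRpow (-β)) (k + 1) n
        = ∑' m, jpnRpow (-β) m * convPow (jpnRpow (-β)) k (n - m) := convPow_succ _ _ _
      _ ≤ ∑' m, jpnRpow (-β) m * (C * jpnRpow (-γ) (n - m)) :=
          ENNReal.tsum_le_tsum fun m => by gcongr; exact hCn _
      _ = C * ∑' m, jpnRpow (-β) m * jpnRpow (-γ) (n - m) := by
          rw [← ENNReal.tsum_mul_left]
          exact tsum_congr fun m => by ring
      _ ≤ C * (C' * jpnRpow (-(β + γ - e)) n) := by gcongr; exact hC'n n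
      _ = C' * C * jpnRpow (-(e - ↑(k + 1) * (e - β))) n := by
          rw [show β + γ - e = e - ↑(k + 1) * (e - β) by simp only [γ]; push_cast; ring]
          ring

end Bracket

lemma exists_exponent_gt {d β s : ℝ} (j : ℕ) (hγ : 0 < j * β - (j - 1) * d)
    (hs : s < j * (β - d)) :
    ∃ e, d < e ∧ 0 ≤ e - j * (e - β) ∧ d < e - j * (e - β) - s := by
  have hlim : Tendsto (fun e : ℝ => e - j * (e - β)) (𝓝[>] d) (𝓝 (d - j * (d - β))) :=
    ((continuous_id.sub (continuous_const.mul (continuous_id.sub continuous_const))).tendsto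
      d).mono_left nhdsWithin_le_nhds
  obtain ⟨e, hde, hpos, hs'⟩ := (eventually_mem_nhdsWithin.and
    ((hlim.eventually_const_lt (by linarith : 0 < d - j * (d - β))).and
      (hlim.eventually_const_lt (by linarith : d + s < d - j * (d - β))))).exists
  exact ⟨e, hde, hpos.le, by linarith⟩

theorem stmt10_general (d j : ℕ) (α σ : ℝ)
    (h1 : ((j : ℝ) - 1) * (d : ℝ) / (2 * (j : ℝ)) < 1 + α)
    (h2 : 1 + α < (d : ℝ) / 2)
    (h3 : σ < (j : ℝ) * (α + 1 - (d : ℝ) / 2)) :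
    (∑' n : Fin d → ℤ, ENNReal.ofReal (jpn n ^ (2 * σ)) *
      ∑' v : Fin j → (Fin d → ℤ),
        (if (∑ l, v l) = n
         then ∏ l, ENNReal.ofReal (jpn (v l) ^ (-2 * (1 + α)))
         else 0)) < ⊤ := by
  change ∑' n, jpnRpow (2 * σ) n * convPow (jpnRpow (-2 * (1 + α))) j n < ∞
  set β := 2 * (1 + α)
  have hγ : 0 < j * β - (j - 1) * d := by
    rcases j.eq_zero_or_pos with rfl | hjpos
    · simp only [Nat.cast_zero, zero_sub, neg_mul, one_mul, mul_zero, div_zero, zero_mul,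
        sub_neg_eq_add, zero_add] at h1 ⊢
      linarith
    · rw [div_lt_iff₀ (by positivity)] at h1
      linarith
  obtain ⟨e, hde, hγe, hσ⟩ := exists_exponent_gt j hγ (s := 2 * σ) (by linarith)
  obtain ⟨C, hC, hT⟩ := exists_convPow_jpnRpow_le hde (by linarith) j hγe
  rw [neg_mul]
  calc ∑' n, jpnRpow (2 * σ) n * convPow (jpnRpow (-β)) j n
      ≤ ∑' n, jpnRpow (2 * σ) n * (C * jpnRpow (-(e - j * (e - β))) n) :=
        ENNReal.tsum_le_tsum fun n => by gcongr; exact hT n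
    _ = C * ∑' n : Fin d → ℤ, jpnRpow (-(e - j * (e - β) - 2 * σ)) n := by
        rw [← ENNReal.tsum_mul_left]
        refine tsum_congr fun n => ?_
        rw [mul_left_comm, jpnRpow_mul_jpnRpow]
        ring_nf
    _ < ∞ := ENNReal.mul_lt_top hC (tsum_jpnRpow_neg_lt_top hσ)

/-- summability of the iterated discrete convolution (Z8):
for `(j-1)d/(2j) < 1 + α < d/2` and `σ < j(α + 1 - d/2)`,
`∑_{n} ⟨n⟩^{2σ} ∑_{n₁+⋯+n_j = n} ⟨n₁⟩^{-2(1+α)} ⋯ ⟨n_j⟩^{-2(1+α)} < ∞`. -/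
theorem stmt10 (d j : ℕ) (hd : 1 ≤ d) (hj : 2 ≤ j) (α σ : ℝ)
    (h1 : ((j : ℝ) - 1) * (d : ℝ) / (2 * (j : ℝ)) < 1 + α)
    (h2 : 1 + α < (d : ℝ) / 2)
    (h3 : σ < (j : ℝ) * (α + 1 - (d : ℝ) / 2)) :
    (∑' n : Fin d → ℤ, ENNReal.ofReal (jpn n ^ (2 * σ)) *
      ∑' v : Fin j → (Fin d → ℤ),
        (if (∑ l, v l) = n
         then ∏ l, ENNReal.ofReal (jpn (v l) ^ (-2 * (1 + α)))
         else 0)) < ⊤ :=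
  stmt10_general d j α σ h1 h2 h3
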